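/- Let 3 ≤ d₁ ≤ d₂ ≤ d₃ and ω = e^{2πi/3}. With S the set of d₃+1 tripartite states of Eq. (7) (as in the previous statement), if a d₂×d₂ complex matrix E satisfies ⟨ψ| (I ⊗ E ⊗ I) |φ⟩ = 0 for all distinct ψ, φ ∈ S, then E = c·I for some c ∈ ℂ. -/

import Mathlib

open Finset

/-- Coefficient function of the basis vector `|a⟩⊗|b⟩⊗|c⟩` in
`ℂ^{d₁} ⊗ ℂ^{d₂} ⊗ ℂ^{d₃}`. -/
noncomputable def ket3 (d₁ d₂ d₃ : ℕ) (a b c : ℕ) : Fin d₁ → Fin d₂ → Fin d₃ → ℂ :=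
  fun x y z => if (x : ℕ) = a ∧ (y : ℕ) = b ∧ (z : ℕ) = c then 1 else 0

/-- The `d₃+1` states of Theorem 4 (Eq. (7)) in `ℂ^{d₁} ⊗ ℂ^{d₂} ⊗ ℂ^{d₃}`,
with `ω = exp(2πi/3)`: index `0` is `|000⟩ − |111⟩`; `1 ≤ i ≤ d₁−1` gives
`|i00⟩ + ω|0i0⟩ + ω²|00i⟩`; `d₁ ≤ j ≤ d₂−1` gives `|0j0⟩ − |00j⟩`;
`d₂ ≤ k ≤ d₃−1` gives `|00k⟩ − |2,1,(k−1)⟩`; index `d₃` is the stopper. -/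
noncomputable def stateT (d₁ d₂ d₃ : ℕ) (i : ℕ) : Fin d₁ → Fin d₂ → Fin d₃ → ℂ :=
  if i = 0 then ket3 d₁ d₂ d₃ 0 0 0 - ket3 d₁ d₂ d₃ 1 1 1
  else if i < d₁ then
    ket3 d₁ d₂ d₃ i 0 0 + (Complex.exp (2 * Real.pi * Complex.I / 3)) • ket3 d₁ d₂ d₃ 0 i 0
      + (Complex.exp (2 * Real.pi * Complex.I / 3)) ^ 2 • ket3 d₁ d₂ d₃ 0 0 i
  else if i < d₂ then ket3 d₁ d₂ d₃ 0 i 0 - ket3 d₁ d₂ d₃ 0 0 i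
  else if i < d₃ then ket3 d₁ d₂ d₃ 0 0 i - ket3 d₁ d₂ d₃ 2 1 (i - 1)
  else fun _ _ _ => 1

/-!
Write `B(ψ, φ) = ⟨ψ|(I ⊗ E ⊗ I)|φ⟩`. It pairs `|abc⟩` with `|a'b'c'⟩` only when `(a, c) = (a', c')`,
and then gives `E b b'`. For `p < d₂` the `(0, 0)`-slice of the `p`-th state is `β_p |0p0⟩` with
`β_p ∈ {1, ω}`, and distinct such states share no other slice, so orthogonality of the `p`-th and
`q`-th states reads `conj β_p * β_q * E p q = 0`: `E` is diagonal. Against the stopper, the `p`-th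
state with `0 < p < d₂` gives `conj β_p * (r_p - r_0)`, where `r_b` is the `b`-th row sum of `E`
(for `p < d₁` this uses `1 + conj ω + conj ω ^ 2 = 0`). Hence all row sums, i.e. all diagonal
entries, agree.
-/

lemma isPrimitiveRoot_exp_two_pi_I_div_three :
    IsPrimitiveRoot (Complex.exp (2 * Real.pi * Complex.I / 3)) 3 := by
  simpa using Complex.isPrimitiveRoot_exp 3 (by norm_num)

lemma IsPrimitiveRoot.one_add_add_sq_eq_zero {R : Type*} [CommRing R] [IsDomain R] {ζ : R}
    (hζ : IsPrimitiveRoot ζ 3) : 1 + ζ + ζ ^ 2 = 0 := by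
  simpa [Finset.sum_range_succ] using hζ.geom_sum_eq_zero (by norm_num)

section BobForm

variable {d₁ d₂ d₃ : ℕ}

/-- `bobForm E ψ φ = ⟨ψ|(I ⊗ E ⊗ I)|φ⟩`. -/
noncomputable def bobForm (E : Matrix (Fin d₂) (Fin d₂) ℂ) :
    (Fin d₁ → Fin d₂ → Fin d₃ → ℂ) →ₗ⋆[ℂ] (Fin d₁ → Fin d₂ → Fin d₃ → ℂ) →ₗ[ℂ] ℂ :=
  LinearMap.mk₂'ₛₗ (starRingEnd ℂ) (RingHom.id ℂ)
    (fun ψ φ => ∑ a, ∑ b, ∑ c, starRingEnd ℂ (ψ a b c) * ∑ b', E b b' * φ a b' c)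
    (fun _ _ _ => by simp [add_mul, sum_add_distrib])
    (fun _ _ _ => by simp [mul_sum, mul_assoc])
    (fun _ _ _ => by simp [mul_add, sum_add_distrib])
    (fun _ _ _ => by simp [mul_sum, mul_left_comm])

variable (E : Matrix (Fin d₂) (Fin d₂) ℂ)

lemma bobForm_apply (ψ φ : Fin d₁ → Fin d₂ → Fin d₃ → ℂ) :
    bobForm E ψ φ = ∑ a, ∑ b, ∑ c, starRingEnd ℂ (ψ a b c) * ∑ b', E b b' * φ a b' c :=
  rfl

lemma bobForm_ket3_left {a b c : ℕ} (ha : a < d₁) (hb : b < d₂) (hc : c < d₃)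
    (φ : Fin d₁ → Fin d₂ → Fin d₃ → ℂ) :
    bobForm E (ket3 d₁ d₂ d₃ a b c) φ = ∑ b', E ⟨b, hb⟩ b' * φ ⟨a, ha⟩ b' ⟨c, hc⟩ := by
  rw [bobForm_apply]
  simp only [ket3, ← Fin.eq_mk_iff_val_eq (hk := ha), ← Fin.eq_mk_iff_val_eq (hk := hb),
    ← Fin.eq_mk_iff_val_eq (hk := hc), ite_and]
  simp [apply_ite (starRingEnd ℂ), ite_mul]

lemma bobForm_ket3_ket3_of_ne {a b c a' b' c' : ℕ} (h : a ≠ a' ∨ c ≠ c') :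
    bobForm E (ket3 d₁ d₂ d₃ a b c) (ket3 d₁ d₂ d₃ a' b' c') = 0 := by
  rw [bobForm_apply]
  refine sum_eq_zero fun x _ => sum_eq_zero fun y _ => sum_eq_zero fun z _ => ?_
  by_cases hx : (x : ℕ) = a ∧ (y : ℕ) = b ∧ (z : ℕ) = c
  · refine mul_eq_zero_of_right _ (sum_eq_zero fun y' _ => ?_)
    simp only [ket3]
    rw [if_neg (by omega), mul_zero]
  · simp [ket3, hx]

lemma bobForm_ket3_ket3 {a b c b' : ℕ} (ha : a < d₁) (hb : b < d₂) (hc : c < d₃) (hb' : b' < d₂) :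
    bobForm E (ket3 d₁ d₂ d₃ a b c) (ket3 d₁ d₂ d₃ a b' c) = E ⟨b, hb⟩ ⟨b', hb'⟩ := by
  simp [bobForm_ket3_left E ha hb hc, ket3, ← Fin.eq_mk_iff_val_eq (hk := hb')]

lemma bobForm_ket3_const_one {a b c : ℕ} (ha : a < d₁) (hb : b < d₂) (hc : c < d₃) :
    bobForm E (ket3 d₁ d₂ d₃ a b c) (fun _ _ _ => 1) = ∑ b', E ⟨b, hb⟩ b' := by
  simp [bobForm_ket3_left E ha hb hc]

end BobForm

/-- The coefficient of `|0p0⟩` in `stateT d₁ d₂ d₃ p`, for `p < d₂`. -/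
noncomputable def stateTCoeff (d₁ p : ℕ) : ℂ :=
  if p ≠ 0 ∧ p < d₁ then Complex.exp (2 * Real.pi * Complex.I / 3) else 1

lemma stateTCoeff_ne_zero (d₁ p : ℕ) : stateTCoeff d₁ p ≠ 0 := by
  unfold stateTCoeff; split_ifs <;> simp [Complex.exp_ne_zero]

section States

variable {d₁ d₂ d₃ : ℕ} (E : Matrix (Fin d₂) (Fin d₂) ℂ)

lemma bobForm_stateT_stateT {p q : ℕ} (hp : p < d₂) (hq : q < d₂) (h₀ : 0 < d₁) (h₂₃ : d₂ ≤ d₃)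
    (hpq : p ≠ q) :
    bobForm E (stateT d₁ d₂ d₃ p) (stateT d₁ d₂ d₃ q) =
      starRingEnd ℂ (stateTCoeff d₁ p) * stateTCoeff d₁ q * E ⟨p, hp⟩ ⟨q, hq⟩ := by
  simp only [stateT, stateTCoeff]
  split_ifs <;> subst_vars <;> first | omega |
    simp (disch := omega) [bobForm_ket3_ket3_of_ne, bobForm_ket3_ket3, mul_assoc]

lemma stateT_self (h₀ : 0 < d₁) (h₁₂ : d₁ ≤ d₂) (h₂₃ : d₂ ≤ d₃) :
    stateT d₁ d₂ d₃ d₃ = fun _ _ _ => 1 := by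
  simp only [stateT]
  split_ifs <;> first | omega | rfl

lemma bobForm_stateT_stateT_self {p : ℕ} (hp₀ : p ≠ 0) (hp : p < d₂) (h₀ : 0 < d₁)
    (h₁₂ : d₁ ≤ d₂) (h₂₃ : d₂ ≤ d₃) :
    bobForm E (stateT d₁ d₂ d₃ p) (stateT d₁ d₂ d₃ d₃) =
      starRingEnd ℂ (stateTCoeff d₁ p) *
        (∑ b, E ⟨p, hp⟩ b - ∑ b, E ⟨0, h₀.trans_le h₁₂⟩ b) := by
  have hω := (isPrimitiveRoot_exp_two_pi_I_div_three.map_of_injective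
    (starRingEnd ℂ).injective).one_add_add_sq_eq_zero
  rw [stateT_self h₀ h₁₂ h₂₃]
  simp only [stateT, stateTCoeff]
  split_ifs <;> first | omega |
    simp (disch := omega) [bobForm_ket3_const_one]
  linear_combination (∑ b, E ⟨0, h₀.trans_le h₁₂⟩ b) * hω

end States

lemma Matrix.exists_eq_smul_one_of_apply_eq_zero_of_sum_eq {n R : Type*} [Fintype n]
    [DecidableEq n] [Semiring R] {E : Matrix n n R} (hoff : ∀ p q, p ≠ q → E p q = 0)
    (hrow : ∀ p q, ∑ b, E p b = ∑ b, E q b) : ∃ k : R, E = k • 1 := by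
  rcases isEmpty_or_nonempty n with _ | ⟨⟨p₀⟩⟩
  · exact ⟨0, Subsingleton.elim _ _⟩
  have hdiag (p : n) : ∑ b, E p b = E p p :=
    Fintype.sum_eq_single p fun b hb => hoff p b hb.symm
  refine ⟨E p₀ p₀, Matrix.ext fun p q => ?_⟩
  rcases eq_or_ne p q with rfl | hpq
  · simp [← hdiag, hrow p p₀]
  · simp [hoff p q hpq, hpq]

theorem bob_trivial_T (d₁ d₂ d₃ : ℕ) (h1 : 3 ≤ d₁) (h2 : d₁ ≤ d₂) (h3 : d₂ ≤ d₃)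
    (E : Matrix (Fin d₂) (Fin d₂) ℂ)
    (hE : ∀ i j : ℕ, i ≤ d₃ → j ≤ d₃ → i ≠ j →
      ∑ a : Fin d₁, ∑ b : Fin d₂, ∑ c : Fin d₃,
        (starRingEnd ℂ) (stateT d₁ d₂ d₃ i a b c) *
          (∑ b' : Fin d₂, E b b' * stateT d₁ d₂ d₃ j a b' c) = 0) :
    ∃ k : ℂ, E = k • (1 : Matrix (Fin d₂) (Fin d₂) ℂ) := by
  have h₀ : 0 < d₁ := by omega
  have hB : ∀ i j : ℕ, i ≤ d₃ → j ≤ d₃ → i ≠ j →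
      bobForm E (stateT d₁ d₂ d₃ i) (stateT d₁ d₂ d₃ j) = 0 := hE
  have hrow₀ : ∀ p : Fin d₂, ∑ b, E p b = ∑ b, E ⟨0, h₀.trans_le h2⟩ b := by
    intro ⟨p, hp⟩
    rcases eq_or_ne p 0 with rfl | hp₀
    · rfl
    have h := hB p d₃ (by omega) le_rfl (by omega)
    rw [bobForm_stateT_stateT_self E hp₀ hp h₀ h2 h3] at h
    simpa [stateTCoeff_ne_zero, sub_eq_zero] using h
  refine Matrix.exists_eq_smul_one_of_apply_eq_zero_of_sum_eq (fun ⟨p, hp⟩ ⟨q, hq⟩ hpq => ?_)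
    fun p q => (hrow₀ p).trans (hrow₀ q).symm
  replace hpq : p ≠ q := by simpa using hpq
  have h := hB p q (by omega) (by omega) hpq
  rw [bobForm_stateT_stateT E hp hq h₀ h3 hpq] at h
  simpa [stateTCoeff_ne_zero] using h
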